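/- arXiv:1905.13422 — 2 statements merged into one kernel-verified Lean document; each statement's English description precedes it below -/
import Mathlib

section
/- Let v_1, …, v_t be t pairwise distinct vectors in ℕ^m. Then there exists a subset S ⊆ {1, …, m} with |S| ≤ t − 1 such that the restrictions of the v_i to the coordinates in S are pairwise distinct. -/
/-- given `t` pairwise distinct vectors in `ℕ^m`, there is a set `S`
of at most `t − 1` coordinates whose restrictions already distinguish all of them. -/
theorem exists_small_separating_coordinate_set
    (m t : ℕ) (v : Fin t → (Fin m → ℕ))
    (hv : ∀ i j : Fin t, i ≠ j → v i ≠ v j) :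
    ∃ S : Finset (Fin m), S.card ≤ t - 1 ∧
      ∀ i j : Fin t, i ≠ j → ∃ k ∈ S, v i k ≠ v j k := by
  induction t with
  | zero => exact ⟨∅, by simp, fun i => i.elim0⟩
  | succ n ih =>
    set w : Fin n → (Fin m → ℕ) := fun i => v i.castSucc with hw
    have hw' : ∀ i j : Fin n, i ≠ j → w i ≠ w j := fun i j hij =>
      hv _ _ (by simpa [Fin.castSucc_inj] using hij)
    obtain ⟨S, hScard, hsep⟩ := ih w hw'
    -- key fact: for i ≠ last, v i ≠ v last, hence a coordinate differs
    have hdiff : ∀ i : Fin n, ∃ k, v i.castSucc k ≠ v (Fin.last n) k := by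
      intro i
      have : v i.castSucc ≠ v (Fin.last n) :=
        hv _ _ (by simp [Fin.ext_iff, Fin.castSucc, i.isLt.ne])
      exact Function.ne_iff.mp this
    by_cases h : ∃ i : Fin n, ∀ k ∈ S, v i.castSucc k = v (Fin.last n) k
    · obtain ⟨i0, hi0⟩ := h
      obtain ⟨k0, hk0⟩ := hdiff i0
      refine ⟨insert k0 S, ?_, ?_⟩
      · calc (insert k0 S).card ≤ S.card + 1 := Finset.card_insert_le _ _
          _ ≤ (n - 1) + 1 := by omega
          _ ≤ n := by have := i0.pos; omega
      · -- separation on last vs castSucc, abstracted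
        have key : ∀ j : Fin n, ∃ k ∈ insert k0 S,
            v (Fin.last n) k ≠ v j.castSucc k := by
          intro j
          by_cases hj : ∀ k ∈ S, v j.castSucc k = v (Fin.last n) k
          · have hji0 : j = i0 := by
              by_contra hne
              obtain ⟨k, hkS, hk⟩ := hsep j i0 hne
              exact hk ((hj k hkS).trans (hi0 k hkS).symm)
            subst hji0
            exact ⟨k0, Finset.mem_insert_self _ _, fun he => hk0 he.symm⟩
          · push_neg at hj
            obtain ⟨k, hkS, hk⟩ := hj
            exact ⟨k, Finset.mem_insert_of_mem hkS, fun he => hk he.symm⟩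
        intro i j hij
        rcases Fin.eq_castSucc_or_eq_last i with ⟨i', rfl⟩ | rfl
        · rcases Fin.eq_castSucc_or_eq_last j with ⟨j', rfl⟩ | rfl
          · obtain ⟨k, hkS, hk⟩ := hsep i' j' (by simpa [Fin.castSucc_inj] using hij)
            exact ⟨k, Finset.mem_insert_of_mem hkS, hk⟩
          · obtain ⟨k, hkS, hk⟩ := key i'
            exact ⟨k, hkS, fun he => hk he.symm⟩
        · rcases Fin.eq_castSucc_or_eq_last j with ⟨j', rfl⟩ | rfl
          · exact key j'
          · exact absurd rfl hij
    · push_neg at h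
      refine ⟨S, by omega, ?_⟩
      intro i j hij
      rcases Fin.eq_castSucc_or_eq_last i with ⟨i', rfl⟩ | rfl
      · rcases Fin.eq_castSucc_or_eq_last j with ⟨j', rfl⟩ | rfl
        · exact hsep i' j' (by simpa [Fin.castSucc_inj] using hij)
        · obtain ⟨k, hkS, hk⟩ := h i'
          exact ⟨k, hkS, hk⟩
      · rcases Fin.eq_castSucc_or_eq_last j with ⟨j', rfl⟩ | rfl
        · obtain ⟨k, hkS, hk⟩ := h j'
          exact ⟨k, hkS, fun he => hk he.symm⟩
        · exact absurd rfl hij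
end

section
/- Fix δ > 0 and t ≥ 1. For any finite multisets 𝒳_1, …, 𝒳_t of points in a bounded domain D ⊂ ℝ^d, there exists a function φ : D → ℝ^t (given by indicators of at most t Voronoi cells of diameter ≤ δ) such that the sum aggregator sum(𝒳) = Σ_{x∈𝒳} φ(x) satisfies: sum(𝒳_i) = sum(𝒳_j) implies there exists a bijection ψ : 𝒳_i → 𝒳_j with ‖ψ(x) − y‖_∞ ≤ δ for all matched pairs. That is, sum with a t-output φ is (t, δ)-injective w.r.t. the ℓ_∞ norm. -/
/-- A δ-close multiset bijection between `X` and `Y`. -/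
def CloseBij {E : Type*} [PseudoMetricSpace E] (δ : ℝ) (X Y : Multiset E) : Prop :=
  ∃ Z : Multiset (E × E),
    Z.map Prod.fst = X ∧ Z.map Prod.snd = Y ∧ ∀ z ∈ Z, dist z.1 z.2 ≤ δ

lemma multiset_sum_map_apply {α ι : Type*} [Fintype ι] (s : Multiset α)
    (f : α → ι → ℝ) (k : ι) : ((s.map f).sum) k = (s.map (fun x => f x k)).sum := by
  induction s using Multiset.induction with
  | empty => simp
  | cons a s ih => simp [ih]

/-- If two multisets have the same image under `g`, and `g x = g y` forces
`dist x y ≤ δ`, then there is a δ-close bijection. -/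
lemma closeBij_of_map_eq {E : Type*} [PseudoMetricSpace E] {δ : ℝ} {β : Type*} (g : E → β)
    (hg : ∀ x y, g x = g y → dist x y ≤ δ) :
    ∀ (X Y : Multiset E), X.map g = Y.map g → CloseBij δ X Y := by
  intro X
  induction X using Multiset.induction with
  | empty =>
    intro Y h
    have hY : Y = 0 := Multiset.map_eq_zero.mp h.symm
    exact ⟨0, by simp, by simp [hY], by simp⟩
  | cons a X ih =>
    intro Y h
    have hmem : g a ∈ Y.map g := by rw [← h]; simp
    obtain ⟨b, hb, hgb⟩ := Multiset.mem_map.mp hmem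
    obtain ⟨Y', rfl⟩ := Multiset.exists_cons_of_mem hb
    have h' : X.map g = Y'.map g := by
      have h2 : g a ::ₘ X.map g = g a ::ₘ Y'.map g := by
        simpa [Multiset.map_cons, hgb] using h
      exact (Multiset.cons_inj_right _).mp h2
    obtain ⟨Z, h1, h2, h3⟩ := ih Y' h'
    refine ⟨(a, b) ::ₘ Z, by simp [h1], by simp [h2], ?_⟩
    intro z hz
    rcases Multiset.mem_cons.mp hz with rfl | hz
    · exact hg a b hgb.symm
    · exact h3 z hz

/-- Base-`N` representations are unique. -/
lemma baseN_inj (N : ℕ) : ∀ (m : ℕ) (f g : Fin m → ℕ),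
    (∀ k, f k < N) → (∀ k, g k < N) →
    (∑ k, f k * N ^ (k : ℕ)) = (∑ k, g k * N ^ (k : ℕ)) → f = g := by
  intro m
  induction m with
  | zero => intro f g _ _ _; funext k; exact k.elim0
  | succ m ih =>
    intro f g hf hg h
    have hN : 0 < N := Nat.pos_of_ne_zero (by rintro rfl; exact Nat.not_lt_zero _ (hf 0))
    have key : f 0 + N * (∑ k : Fin m, f k.succ * N ^ (k : ℕ))
             = g 0 + N * (∑ k : Fin m, g k.succ * N ^ (k : ℕ)) := by
      rw [Fin.sum_univ_succ, Fin.sum_univ_succ] at h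
      have h' : f 0 + ∑ k : Fin m, N * (f k.succ * N ^ (k : ℕ))
              = g 0 + ∑ k : Fin m, N * (g k.succ * N ^ (k : ℕ)) := by
        simpa [pow_succ, mul_assoc, mul_comm, mul_left_comm] using h
      rw [← Finset.mul_sum, ← Finset.mul_sum] at h'
      exact h'
    have h0 : f 0 = g 0 := by
      have := congrArg (· % N) key
      simpa [Nat.add_mul_mod_self_left, Nat.mod_eq_of_lt (hf 0),
        Nat.mod_eq_of_lt (hg 0)] using this
    have hrest : (∑ k : Fin m, f k.succ * N ^ (k : ℕ))
               = (∑ k : Fin m, g k.succ * N ^ (k : ℕ)) := by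
      have h2 : N * (∑ k : Fin m, f k.succ * N ^ (k : ℕ))
              = N * (∑ k : Fin m, g k.succ * N ^ (k : ℕ)) := by omega
      exact Nat.eq_of_mul_eq_mul_left hN h2
    have hs := ih (fun k => f k.succ) (fun k => g k.succ)
      (fun k => hf k.succ) (fun k => hg k.succ) hrest
    funext k
    refine Fin.cases h0 (fun k => ?_) k
    exact congrFun hs k

/-- the sum aggregator with a `t`-output feature map `φ` is
(t, δ)-injective w.r.t. the ℓ_∞ norm: for any `t` finite multisets in a bounded
domain `D ⊆ ℝ^d` there is `φ : ℝ^d → ℝ^t` such that equal sums `Σ_{x∈𝒳} φ(x)`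
force a δ-close (in ℓ_∞) bijection between the corresponding multisets. -/
theorem sum_aggregator_t_delta_injective
    (d t : ℕ) (ht : 1 ≤ t) (δ : ℝ) (hδ : 0 < δ)
    (D : Set (PiLp ⊤ (fun _ : Fin d => ℝ))) (hD : Bornology.IsBounded D)
    (𝒳 : Fin t → Multiset (PiLp ⊤ (fun _ : Fin d => ℝ)))
    (h𝒳 : ∀ i, ∀ x ∈ 𝒳 i, x ∈ D) :
    ∃ φ : PiLp ⊤ (fun _ : Fin d => ℝ) → (Fin t → ℝ),
      ∀ i j : Fin t,
        ((𝒳 i).map φ).sum = ((𝒳 j).map φ).sum → CloseBij δ (𝒳 i) (𝒳 j) := by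
  classical
  -- the grid-cell map: each cell has ℓ∞-diameter ≤ δ
  set g : PiLp ⊤ (fun _ : Fin d => ℝ) → (Fin d → ℤ) := fun x k => ⌊x k / δ⌋ with hgdef
  have hg : ∀ x y : PiLp ⊤ (fun _ : Fin d => ℝ), g x = g y → dist x y ≤ δ := by
    intro x y hxy
    rw [PiLp.dist_eq_iSup]
    refine Real.iSup_le (fun k => ?_) hδ.le
    have hk : ⌊x k / δ⌋ = ⌊y k / δ⌋ := congrFun hxy k
    have h1 : |x k / δ - y k / δ| < 1 := Int.abs_sub_lt_one_of_floor_eq_floor hk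
    have hx : x k - y k = (x k / δ - y k / δ) * δ := by field_simp
    have h2 : |x k - y k| < δ := by
      rw [hx, abs_mul, abs_of_pos hδ]
      calc |x k / δ - y k / δ| * δ < 1 * δ := mul_lt_mul_of_pos_right h1 hδ
      _ = δ := one_mul δ
    calc dist (x k) (y k) = |x k - y k| := Real.dist_eq _ _
    _ ≤ δ := h2.le
  -- the union of all multisets, occupied cells, and the encoding
  set U : Multiset (PiLp ⊤ (fun _ : Fin d => ℝ)) := ∑ i : Fin t, 𝒳 i with hUdef
  have hle : ∀ i, 𝒳 i ≤ U :=
    fun i => Finset.single_le_sum (f := 𝒳) (fun _ _ => Multiset.zero_le _) (Finset.mem_univ i)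
  set A : Finset (Fin d → ℤ) := (U.map g).toFinset with hAdef
  set m := A.card with hm
  set e : {a // a ∈ A} ≃ Fin m := A.equivFin with he
  set N : ℕ := Multiset.card U + 1 with hNdef
  set encZ : (Fin d → ℤ) → ℕ := fun a =>
    if h : a ∈ A then N ^ (e ⟨a, h⟩ : ℕ) else 0 with hencdef
  refine ⟨fun x _ => ((encZ (g x) : ℝ)), ?_⟩
  intro i j hsum
  -- facts for an arbitrary index
  have hsub : ∀ i : Fin t, ((𝒳 i).map g).toFinset ⊆ A := by
    intro i
    exact Multiset.toFinset_subset.mpr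
      (Multiset.subset_of_le (Multiset.map_le_map (hle i)))
  have hcount : ∀ i : Fin t, ∀ a, ((𝒳 i).map g).count a < N := by
    intro i a
    calc ((𝒳 i).map g).count a ≤ Multiset.card ((𝒳 i).map g) := Multiset.count_le_card _ _
    _ = Multiset.card (𝒳 i) := by simp
    _ ≤ Multiset.card U := Multiset.card_le_card (hle i)
    _ < N := Nat.lt_succ_self _
  -- rewrite the encoded sum as a base-N expansion of the count vector
  have hexp : ∀ i : Fin t,
      ((𝒳 i).map (fun x => encZ (g x))).sum
        = ∑ k : Fin m, ((𝒳 i).map g).count ((e.symm k) : Fin d → ℤ) * N ^ (k : ℕ) := by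
    intro i
    have h1 : ((𝒳 i).map (fun x => encZ (g x))).sum = (((𝒳 i).map g).map encZ).sum := by
      rw [Multiset.map_map]; rfl
    rw [h1, Finset.sum_multiset_map_count]
    rw [Finset.sum_subset (hsub i) (by
      intro a _ ha
      have : ((𝒳 i).map g).count a = 0 :=
        Multiset.count_eq_zero.mpr (fun hmem => ha (Multiset.mem_toFinset.mpr hmem))
      simp [this])]
    rw [← Finset.sum_coe_sort A (fun a => ((𝒳 i).map g).count a • encZ a)]
    rw [← Equiv.sum_comp e.symm (fun a => ((𝒳 i).map g).count (a : Fin d → ℤ) • encZ (a : Fin d → ℤ))]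
    refine Finset.sum_congr rfl (fun k _ => ?_)
    have hmem := (e.symm k).2
    simp only [hencdef, dif_pos hmem, smul_eq_mul]
    congr 2
    rw [Subtype.coe_eta, Equiv.apply_symm_apply]
  -- equal real sums give equal natural sums
  have hreal : (((𝒳 i).map (fun x => ((encZ (g x) : ℝ)))).sum)
             = (((𝒳 j).map (fun x => ((encZ (g x) : ℝ)))).sum) := by
    have h0 := congrFun hsum ⟨0, ht⟩
    rw [multiset_sum_map_apply, multiset_sum_map_apply] at h0
    exact h0
  have hnat : ((𝒳 i).map (fun x => encZ (g x))).sum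
            = ((𝒳 j).map (fun x => encZ (g x))).sum := by
    have hcast : ∀ i : Fin t,
        ((((𝒳 i).map (fun x => encZ (g x))).sum : ℕ) : ℝ)
          = ((𝒳 i).map (fun x => ((encZ (g x) : ℝ)))).sum := by
      intro i
      rw [Nat.cast_multiset_sum, Multiset.map_map]
      rfl
    have := (hcast i).trans (hreal.trans (hcast j).symm)
    exact_mod_cast this
  -- uniqueness of base-N expansion: counts coincide
  have hc := baseN_inj N m
    (fun k => ((𝒳 i).map g).count ((e.symm k) : Fin d → ℤ))
    (fun k => ((𝒳 j).map g).count ((e.symm k) : Fin d → ℤ))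
    (fun k => hcount i _) (fun k => hcount j _)
    (by rw [← hexp i, ← hexp j]; exact hnat)
  -- hence the g-images agree as multisets
  have hmapeq : (𝒳 i).map g = (𝒳 j).map g := by
    ext a
    by_cases ha : a ∈ A
    · have := congrFun hc (e ⟨a, ha⟩)
      simpa [Equiv.symm_apply_apply] using this
    · have hzi : ((𝒳 i).map g).count a = 0 :=
        Multiset.count_eq_zero.mpr (fun hmem => ha (hsub i (Multiset.mem_toFinset.mpr hmem)))
      have hzj : ((𝒳 j).map g).count a = 0 :=
        Multiset.count_eq_zero.mpr (fun hmem => ha (hsub j (Multiset.mem_toFinset.mpr hmem)))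
      rw [hzi, hzj]
  exact closeBij_of_map_eq g hg _ _ hmapeq
end
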